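/- arXiv:2009.12707 — 3 statements merged into one kernel-verified Lean document; each statement's English description precedes it below -/
import Mathlib

section
/- A closed subspace M of L²(𝕋) satisfies SM = M, where S is multiplication by e^{it}, if and only if M = χ_E · L²(𝕋) for some measurable set E ⊆ 𝕋; moreover E is unique up to a set of measure zero. -/
/-!
If `SM = M`, then `M` is invariant under multiplication by every character `fourier n`, so for
`f ∈ M` and `g ∈ Mᗮ` all Fourier coefficients of `conj f * g` vanish, whence `conj f * g = 0`
a.e. (uniqueness of Fourier coefficients in `L¹`, from the density of trigonometric polynomials
in `C(𝕋)`). Applied to the projection `q` of `1` onto `M`, this gives `conj f * (1 - q) = 0` for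
`f ∈ M` and `conj q * u = 0` for `u ∈ Mᗮ`: functions in `M` vanish off `E = {q ≠ 0}`, those in
`Mᗮ` vanish on `E`, and `M = Mᗮᗮ` is exactly `χ_E · L²`. Conversely `χ_E · L²` is doubly
invariant, and `χ_E ∈ χ_E' · L²` forces `E \ E'` to be null.
-/

open MeasureTheory AddCircle
open scoped ENNReal symmDiff

instance : Fact (0 < 2 * Real.pi) := ⟨by positivity⟩

local notation "μ" => @haarAddCircle (2 * Real.pi) _

open Filter Topology ComplexConjugate
open scoped BoundedContinuousFunction

theorem MeasureTheory.ae_eq_zero_of_forall_integral_smul_eq_zero {X E : Type*}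
    [TopologicalSpace X] [HasOuterApproxClosed X] [MeasurableSpace X] [BorelSpace X]
    [NormedAddCommGroup E] [NormedSpace ℝ E] [CompleteSpace E] {ν : Measure X} {w : X → E}
    (hw : Integrable w ν) (h : ∀ φ : X →ᵇ ℝ, ∫ x, φ x • w x ∂ν = 0) : w =ᵐ[ν] 0 := by
  refine ae_eq_zero_of_forall_setIntegral_isClosed_eq_zero hw fun s hs => ?_
  let φ (n : ℕ) : X →ᵇ ℝ := (hs.apprSeq n).comp _ NNReal.isometry_coe.lipschitz
  have hlim : Tendsto (fun n => ∫ x, φ n x • w x ∂ν) atTop (𝓝 (∫ x in s, w x ∂ν)) := by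
    rw [← integral_indicator hs.measurableSet]
    refine tendsto_integral_of_dominated_convergence (fun x => ‖w x‖)
      (fun n => (φ n).continuous.aestronglyMeasurable.smul hw.1) hw.norm
      (fun n => ae_of_all _ fun x => ?_) (ae_of_all _ fun x => ?_)
    · rw [norm_smul]
      exact mul_le_of_le_one_left (norm_nonneg _)
        (by simpa [φ] using HasOuterApproxClosed.apprSeq_apply_le_one hs n x)
    · have := (NNReal.continuous_coe.tendsto _).comp
        (tendsto_pi_nhds.1 (HasOuterApproxClosed.tendsto_apprSeq hs) x)
      convert this.smul_const (w x) using 1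
      · rfl
      · by_cases hx : x ∈ s <;> simp [hx]
  simp only [h] at hlim
  exact tendsto_nhds_unique hlim tendsto_const_nhds

theorem MeasureTheory.measure_diff_eq_zero_of_setOf_ae_eq_zero_subset {α F : Type*}
    [MeasurableSpace α] [NormedAddCommGroup F] [Nontrivial F] {p : ℝ≥0∞} {ν : Measure α}
    {E E' : Set α} (hE : MeasurableSet E) (hνE : ν E ≠ ∞)
    (h : {f : Lp F p ν | ∀ᵐ x ∂ν, x ∉ E → f x = 0} ⊆ {f | ∀ᵐ x ∂ν, x ∉ E' → f x = 0}) :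
    ν (E \ E') = 0 := by
  obtain ⟨c, hc⟩ := exists_ne (0 : F)
  have hχ : (indicatorConstLp p hE hνE c : α → F) =ᵐ[ν] E.indicator fun _ => c :=
    indicatorConstLp_coeFn
  have hχE' := h <| show indicatorConstLp p hE hνE c ∈ {f : Lp F p ν | _} by
    filter_upwards [hχ] with x hx hxE
    rw [hx, Set.indicator_of_notMem hxE]
  refine measure_eq_zero_iff_ae_notMem.2 ?_
  filter_upwards [hχE', hχ] with x hx hχx hxEE'
  rw [hχx, Set.indicator_of_mem hxEE'.1] at hx
  exact hc (hx hxEE'.2)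

namespace AddCircle

variable {T : ℝ} {p : ℝ≥0∞} {ν : Measure (AddCircle T)}

theorem memLp_fourier_mul (n : ℤ) (f : Lp ℂ p ν) : MemLp (fun x => fourier n x * f x) p ν :=
  (Lp.memLp f).of_le ((fourier n).continuous.aestronglyMeasurable.mul (Lp.aestronglyMeasurable f))
    (ae_of_all _ fun x => by simp [Circle.norm_coe])

theorem exists_fourier_mul_mem {M : Set (Lp ℂ p ν)}
    (h_one : ∀ f ∈ M, ∃ g ∈ M, g =ᵐ[ν] fun x => fourier 1 x * f x)
    (h_neg_one : ∀ f ∈ M, ∃ g ∈ M, g =ᵐ[ν] fun x => fourier (-1) x * f x)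
    (n : ℤ) {f : Lp ℂ p ν} (hf : f ∈ M) : ∃ g ∈ M, g =ᵐ[ν] fun x => fourier n x * f x := by
  induction n using Int.induction_on with
  | zero => exact ⟨f, hf, ae_of_all _ fun x => by simp⟩
  | succ k ih =>
    obtain ⟨g, hg, hgf⟩ := ih
    obtain ⟨g', hg', hg'g⟩ := h_one g hg
    refine ⟨g', hg', ?_⟩
    filter_upwards [hgf, hg'g] with x h1 h2
    rw [h2, h1, ← mul_assoc, ← fourier_add, add_comm]
  | pred k ih =>
    obtain ⟨g, hg, hgf⟩ := ih
    obtain ⟨g', hg', hg'g⟩ := h_neg_one g hg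
    refine ⟨g', hg', ?_⟩
    filter_upwards [hgf, hg'g] with x h1 h2
    rw [h2, h1, ← mul_assoc, ← fourier_add, sub_eq_neg_add]

theorem exists_fourier_mul_mem_of_toCircle_mul_eq {M : Set (Lp ℂ p ν)}
    (hM : {g : Lp ℂ p ν | ∃ f ∈ M, g =ᵐ[ν] fun x => (toCircle x : ℂ) * f x} = M) :
    ∀ n : ℤ, ∀ f ∈ M, ∃ g ∈ M, g =ᵐ[ν] fun x => fourier n x * f x := by
  have h_one (f : Lp ℂ p ν) (hf : f ∈ M) : ∃ g ∈ M, g =ᵐ[ν] fun x => fourier 1 x * f x := by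
    have hcoe := (memLp_fourier_mul 1 f).coeFn_toLp
    refine ⟨_, hM.subset ⟨f, hf, ?_⟩, hcoe⟩
    simpa only [fourier_one] using hcoe
  have h_neg_one (f : Lp ℂ p ν) (hf : f ∈ M) :
      ∃ g ∈ M, g =ᵐ[ν] fun x => fourier (-1) x * f x := by
    obtain ⟨g, hg, hgf⟩ := hM.symm.subset hf
    refine ⟨g, hg, ?_⟩
    filter_upwards [hgf] with x hx
    rw [hx, ← fourier_one, ← mul_assoc, ← fourier_add]
    simp
  exact fun n f hf => exists_fourier_mul_mem h_one h_neg_one n hf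

theorem toCircle_mul_eq_of_eq_setOf_ae_eq_zero {M : Set (Lp ℂ p ν)} {E : Set (AddCircle T)}
    (hM : M = {f | ∀ᵐ x ∂ν, x ∉ E → f x = 0}) :
    {g : Lp ℂ p ν | ∃ f ∈ M, g =ᵐ[ν] fun x => (toCircle x : ℂ) * f x} = M := by
  subst hM
  ext g
  constructor
  · rintro ⟨f, hf, hgf⟩
    filter_upwards [hf, hgf] with x hfx hgx hx
    rw [hgx, hfx hx, mul_zero]
  · intro hg
    have hcoe := (memLp_fourier_mul (-1) g).coeFn_toLp
    refine ⟨(memLp_fourier_mul (-1) g).toLp _, ?_, ?_⟩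
    · filter_upwards [hg, hcoe] with x hgx hx hxE
      rw [hx, hgx hxE, mul_zero]
    · filter_upwards [hcoe] with x hx
      rw [hx, ← fourier_one, ← mul_assoc, ← fourier_add]
      simp

section

variable [Fact (0 < T)]

theorem ae_eq_zero_of_fourierCoeff_eq_zero {E : Type*} [NormedAddCommGroup E] [NormedSpace ℂ E]
    [CompleteSpace E] {w : AddCircle T → E} (hw : Integrable w haarAddCircle)
    (h : ∀ n, fourierCoeff w n = 0) : w =ᵐ[haarAddCircle] 0 := by
  have hint (φ : C(AddCircle T, ℂ)) : Integrable (fun x => φ x • w x) haarAddCircle :=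
    hw.bdd_smul ‖φ‖ φ.continuous.aestronglyMeasurable (ae_of_all _ φ.norm_coe_le_norm)
  let Λ : C(AddCircle T, ℂ) →L[ℂ] E := LinearMap.mkContinuous
    { toFun := fun φ => ∫ x, φ x • w x ∂haarAddCircle
      map_add' := fun φ ψ => by
        simp only [ContinuousMap.add_apply, add_smul, integral_add (hint φ) (hint ψ)]
      map_smul' := fun c φ => by simp [smul_smul, ← integral_smul] }
    (∫ x, ‖w x‖ ∂haarAddCircle) fun φ => by
      rw [mul_comm, ← integral_const_mul]
      refine norm_integral_le_of_norm_le (hw.norm.const_mul _) (ae_of_all _ fun x => ?_)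
      rw [norm_smul]
      exact mul_le_mul_of_nonneg_right (φ.norm_coe_le_norm x) (norm_nonneg _)
  have hΛ : Λ = 0 := by
    refine ContinuousLinearMap.ext_on
      (Submodule.dense_iff_topologicalClosure_eq_top.mpr span_fourier_closure_eq_top) ?_
    rintro _ ⟨n, rfl⟩
    simpa [fourierCoeff, Λ] using h (-n)
  refine ae_eq_zero_of_forall_integral_smul_eq_zero hw fun ψ => ?_
  simpa [Λ, Complex.coe_smul] using
    congr($hΛ ⟨fun x => (ψ x : ℂ), Complex.continuous_ofReal.comp ψ.continuous⟩)

theorem conj_mul_ae_eq_zero_of_mem_orthogonal {M : Submodule ℂ (Lp ℂ 2 (@haarAddCircle T _))}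
    (hM : ∀ n : ℤ, ∀ f ∈ M, ∃ g ∈ M, g =ᵐ[haarAddCircle] fun x => fourier n x * f x)
    {f g : Lp ℂ 2 (@haarAddCircle T _)} (hf : f ∈ M) (hg : g ∈ Mᗮ) :
    (fun x => conj (f x) * g x) =ᵐ[haarAddCircle] 0 := by
  refine ae_eq_zero_of_fourierCoeff_eq_zero ?_ fun n => ?_
  · simpa [mul_comm] using L2.integrable_inner (𝕜 := ℂ) f g
  obtain ⟨f', hf', hf'f⟩ := hM n f hf
  calc fourierCoeff (fun x => conj (f x) * g x) n = inner ℂ f' g := by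
        rw [fourierCoeff, L2.inner_def]
        refine integral_congr_ae ?_
        filter_upwards [hf'f] with x hx
        simp [hx]
        ring
    _ = 0 := Submodule.inner_right_of_mem_orthogonal hf' hg

theorem exists_eq_setOf_ae_eq_zero_of_fourier_mul_mem
    (M : Submodule ℂ (Lp ℂ 2 (@haarAddCircle T _))) [M.HasOrthogonalProjection]
    (hM : ∀ n : ℤ, ∀ f ∈ M, ∃ g ∈ M, g =ᵐ[haarAddCircle] fun x => fourier n x * f x) :
    ∃ E : Set (AddCircle T), MeasurableSet E ∧
      (M : Set (Lp ℂ 2 (@haarAddCircle T _))) =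
        {f | ∀ᵐ x ∂haarAddCircle, x ∉ E → f x = 0} := by
  set one : Lp ℂ 2 (@haarAddCircle T _) := Lp.const 2 haarAddCircle 1
  set q := M.starProjection one
  have hq : q ∈ M := M.starProjection_apply_mem one
  have hq' : one - q ∈ Mᗮ := M.sub_starProjection_mem_orthogonal one
  refine ⟨Function.support q, (Lp.stronglyMeasurable q).measurableSet_support,
    Set.Subset.antisymm (fun f hf => ?_) (fun f hf => ?_)⟩
  · filter_upwards [conj_mul_ae_eq_zero_of_mem_orthogonal hM hf hq', Lp.coeFn_sub one q,
      Lp.coeFn_const 2 haarAddCircle (1 : ℂ)] with x hx hsub hone hxq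
    rw [Function.notMem_support] at hxq
    rw [hsub, Pi.sub_apply, hone, hxq] at hx
    simpa using hx
  · rw [SetLike.mem_coe, ← M.orthogonal_orthogonal]
    intro u hu
    rw [L2.inner_def]
    refine integral_eq_zero_of_ae ?_
    filter_upwards [conj_mul_ae_eq_zero_of_mem_orthogonal hM hq hu, hf] with x hx hfx
    by_cases hxq : q x = 0
    · simp [hfx (Function.notMem_support.2 hxq)]
    · have hux : u x = 0 := by simpa [hxq] using hx
      simp [hux]

end

end AddCircle

/-- a closed subspace `M ⊆ L²(𝕋)` satisfies `SM = M` (where `S` is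
multiplication by `e^{it}`) iff `M = χ_E · L²(𝕋)` for a measurable `E ⊆ 𝕋`,
i.e. `M` is the set of `L²` functions vanishing a.e. off `E`; and `E` is
unique up to a null set. -/
theorem stmt_4 (M : Submodule ℂ (Lp ℂ 2 μ)) (hM : IsClosed (M : Set (Lp ℂ 2 μ))) :
    ({g : Lp ℂ 2 μ | ∃ f ∈ M,
        (g : AddCircle (2 * Real.pi) → ℂ)
          =ᵐ[μ] fun x => (toCircle x : ℂ) * f x} = (M : Set (Lp ℂ 2 μ)) ↔
      ∃ E : Set (AddCircle (2 * Real.pi)), MeasurableSet E ∧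
        (M : Set (Lp ℂ 2 μ)) =
          {f : Lp ℂ 2 μ | ∀ᵐ x ∂μ, x ∉ E → f x = 0}) ∧
    (∀ E E' : Set (AddCircle (2 * Real.pi)), MeasurableSet E → MeasurableSet E' →
      (M : Set (Lp ℂ 2 μ)) = {f : Lp ℂ 2 μ | ∀ᵐ x ∂μ, x ∉ E → f x = 0} →
      (M : Set (Lp ℂ 2 μ)) = {f : Lp ℂ 2 μ | ∀ᵐ x ∂μ, x ∉ E' → f x = 0} →
      μ (E ∆ E') = 0) := by
  refine ⟨⟨fun H => ?_, fun ⟨E, _, hE⟩ => ?_⟩, fun E E' hE hE' h h' => ?_⟩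
  · have : CompleteSpace M := hM.completeSpace_coe
    exact exists_eq_setOf_ae_eq_zero_of_fourier_mul_mem M
      (exists_fourier_mul_mem_of_toCircle_mul_eq H)
  · exact toCircle_mul_eq_of_eq_setOf_ae_eq_zero hE
  · rw [Set.symmDiff_def]
    exact measure_union_null
      (measure_diff_eq_zero_of_setOf_ae_eq_zero_subset hE (measure_ne_top _ _)
        (h.symm.trans h').subset)
      (measure_diff_eq_zero_of_setOf_ae_eq_zero_subset hE' (measure_ne_top _ _)
        (h'.symm.trans h).subset)
end

section
/- (von Neumann's inequality) If T is a linear contraction on a complex Hilbert space and p is a complex polynomial, then ‖p(T)‖ ≤ sup_{|z|≤1} |p(z)|. -/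
/-!
For a strict contraction `T`, let `S θ = (1 - e^{-iθ} T)⁻¹ = ∑ₖ e^{-ikθ} Tᵏ` and let
`P θ = S θ + (S θ)⋆ - 1` be the operator Poisson kernel. Its Fourier coefficients are
`∫ e^{inθ} P θ dθ = 2π Tⁿ` for `n ≥ 0`, hence `2π p(T) = ∫ p(e^{iθ}) P θ dθ`. On the other hand
`P θ = (S θ)⋆ (1 - T⋆T) S θ ≥ 0`, so the Cauchy–Schwarz inequality for the positive form
`⟪·, P θ ·⟫`, together with `∫ ⟪x, P θ x⟫ dθ = 2π ‖x‖²`, bounds `|⟪y, p(T) x⟫|` by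
`sup_{|z| = 1} |p z|` for unit vectors `x`, `y`. A contraction `T` is the limit of the strict
contractions `t T` as `t → 1⁻`.
-/

open Complex Polynomial
open scoped Real

theorem integral_exp_mul_I_zpow (m : ℤ) :
    ∫ θ in (0 : ℝ)..2 * π, exp (θ * I) ^ m = if m = 0 then (2 * π : ℂ) else 0 := by
  split_ifs with hm
  · simp [hm]
  have hmI : (m : ℂ) * I ≠ 0 := mul_ne_zero (Int.cast_ne_zero.mpr hm) I_ne_zero
  simp_rw [← exp_int_mul, ← mul_assoc, mul_right_comm _ _ I]
  have h2π : (m : ℂ) * I * ↑(2 * π) = m * (2 * π * I) := by push_cast; ring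
  rw [integral_exp_mul_complex hmI, h2π, exp_int_mul_two_pi_mul_I]
  simp

theorem continuous_exp_mul_I_zpow (m : ℤ) : Continuous fun θ : ℝ => exp (θ * I) ^ m :=
  (continuous_ofReal.mul continuous_const).cexp.zpow₀ m fun _ => .inl (exp_ne_zero _)

theorem hasSum_integral_tsum_exp_zpow_smul {E : Type*} [NormedAddCommGroup E] [NormedSpace ℂ E]
    [CompleteSpace E] (m : ℕ → ℤ) {a : ℕ → E} (ha : Summable (‖a ·‖)) :
    HasSum (fun k => if m k = 0 then (2 * π : ℂ) • a k else 0)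
      (∫ θ in (0 : ℝ)..2 * π, ∑' k, exp (θ * I) ^ m k • a k) := by
  let f (k : ℕ) : C(ℝ, E) := ⟨fun θ => exp (θ * I) ^ m k • a k,
    (continuous_exp_mul_I_zpow _).smul continuous_const⟩
  have hf_norm : ∀ k θ, ‖f k θ‖ = ‖a k‖ := fun k θ => by
    simp [f, norm_smul, norm_exp_ofReal_mul_I]
  have hf_int : ∀ k, ∫ θ in (0 : ℝ)..2 * π, f k θ = if m k = 0 then (2 * π : ℂ) • a k else 0 := by
    intro k
    simp only [f, ContinuousMap.coe_mk, intervalIntegral.integral_smul_const,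
      integral_exp_mul_I_zpow]
    split_ifs <;> simp
  have hsum := intervalIntegral.hasSum_intervalIntegral_of_summable_norm (a := 0) (b := 2 * π)
    (f := f) <| ha.of_nonneg_of_le (fun _ => norm_nonneg _)
      fun k => (ContinuousMap.norm_le _ (norm_nonneg _)).mpr fun θ => (hf_norm k θ).le
  simp only [hf_int] at hsum
  exact hsum

theorem integral_eval_exp_smul {A : Type*} [NormedRing A] [NormedAlgebra ℂ A] {F : ℝ → A}
    (hF : Continuous F) {b : A}
    (hFb : ∀ n : ℕ, ∫ θ in (0 : ℝ)..2 * π, exp (θ * I) ^ n • F θ = (2 * π : ℂ) • b ^ n)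
    (p : ℂ[X]) :
    ∫ θ in (0 : ℝ)..2 * π, p.eval (exp (θ * I)) • F θ = (2 * π : ℂ) • aeval b p := by
  induction p using Polynomial.induction_on' with
  | add p q hp hq =>
    have hint (r : ℂ[X]) : IntervalIntegrable (fun θ : ℝ => r.eval (exp (θ * I)) • F θ)
        MeasureTheory.volume 0 (2 * π) :=
      Continuous.intervalIntegrable (by fun_prop) _ _
    simp only [eval_add, add_smul, map_add, smul_add]
    rw [intervalIntegral.integral_add (hint p) (hint q), hp, hq]
  | monomial n c =>
    simp only [eval_monomial, mul_smul c, intervalIntegral.integral_smul]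
    rw [hFb, aeval_monomial, ← Algebra.smul_def, smul_comm]

theorem exp_mul_I_pow_smul_eq_tsum {E : Type*} [NormedAddCommGroup E] [NormedSpace ℂ E]
    {m : ℕ → ℤ} {b : ℕ → E} {s : E} {θ : ℝ} (h : HasSum (fun k => exp (θ * I) ^ m k • b k) s)
    (n : ℕ) : exp (θ * I) ^ n • s = ∑' k, exp (θ * I) ^ ((n : ℤ) + m k) • b k := by
  rw [← (h.const_smul _).tsum_eq]
  congr with k
  rw [smul_smul, ← zpow_natCast, ← zpow_add₀ (Complex.exp_ne_zero _)]

theorem add_star_sub_one_eq_star_mul_mul {R : Type*} [Ring R] [StarRing R] {u s : R}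
    (hus : u * s = 1) : s + star s - 1 = star s * (star u + u - star u * u) * s := by
  have hsu : star s * star u = 1 := by rw [← star_mul, hus, star_one]
  simp only [mul_sub, mul_add, sub_mul, add_mul, mul_assoc, hus, mul_one]
  simp only [← mul_assoc, hsu, one_mul]

section

variable {A : Type*} [CStarAlgebra A] {a : A}

theorem one_sub_star_mul_self_nonneg [PartialOrder A] [StarOrderedRing A] (ha : ‖a‖ ≤ 1) :
    0 ≤ 1 - star a * a := by
  refine sub_nonneg.2 (CStarAlgebra.star_mul_le_algebraMap_norm_sq.trans ?_)
  simpa using algebraMap_mono (β := A) (pow_le_one₀ (norm_nonneg a) ha)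

noncomputable def circleResolvent (a : A) (θ : ℝ) : A := Ring.inverse (1 - (exp (θ * I))⁻¹ • a)

noncomputable def operatorPoissonKernel (a : A) (θ : ℝ) : A :=
  circleResolvent a θ + star (circleResolvent a θ) - 1

theorem norm_exp_mul_I_inv_smul (θ : ℝ) (a : A) : ‖(exp (θ * I))⁻¹ • a‖ = ‖a‖ := by
  simp [norm_smul, norm_exp_ofReal_mul_I]

theorem one_sub_mul_circleResolvent (ha : ‖a‖ < 1) (θ : ℝ) :
    (1 - (exp (θ * I))⁻¹ • a) * circleResolvent a θ = 1 :=
  Ring.mul_inverse_cancel _ <| isUnit_one_sub_of_norm_lt_one <|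
    (norm_exp_mul_I_inv_smul θ a).trans_lt ha

theorem operatorPoissonKernel_eq (ha : ‖a‖ < 1) (θ : ℝ) :
    operatorPoissonKernel a θ =
      star (circleResolvent a θ) * (1 - star a * a) * circleResolvent a θ := by
  set c := (exp (θ * I))⁻¹
  have hc : star c * c = 1 := by
    rw [Complex.star_def, ← Complex.inv_eq_conj (by simp [c, norm_exp_ofReal_mul_I]),
      inv_mul_cancel₀ (by simp [c])]
  have hdefect : star (1 - c • a) + (1 - c • a) - star (1 - c • a) * (1 - c • a) =
      1 - star a * a := by
    rw [star_sub, star_one, star_smul]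
    simp only [sub_mul, mul_sub, one_mul, mul_one, smul_mul_smul_comm, hc, one_smul]
    abel
  rw [operatorPoissonKernel, add_star_sub_one_eq_star_mul_mul (one_sub_mul_circleResolvent ha θ),
    hdefect]

theorem operatorPoissonKernel_nonneg [PartialOrder A] [StarOrderedRing A] (ha : ‖a‖ < 1) (θ : ℝ) :
    0 ≤ operatorPoissonKernel a θ := by
  rw [operatorPoissonKernel_eq ha]
  exact star_left_conjugate_nonneg (one_sub_star_mul_self_nonneg ha.le) _

theorem continuous_circleResolvent (ha : ‖a‖ < 1) : Continuous (circleResolvent a) := by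
  refine continuous_iff_continuousAt.2 fun θ => ?_
  have hθ := (norm_exp_mul_I_inv_smul θ a).trans_lt ha
  have hinv := NormedRing.inverse_continuousAt (Units.oneSub _ hθ)
  rw [Units.val_oneSub] at hinv
  refine hinv.comp (f := fun θ : ℝ => 1 - (exp (θ * I))⁻¹ • a) (Continuous.continuousAt ?_)
  fun_prop (disch := exact fun _ => exp_ne_zero _)

theorem continuous_operatorPoissonKernel (ha : ‖a‖ < 1) : Continuous (operatorPoissonKernel a) := by
  have := continuous_circleResolvent ha
  unfold operatorPoissonKernel
  fun_prop

theorem hasSum_circleResolvent (ha : ‖a‖ < 1) (θ : ℝ) :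
    HasSum (fun k : ℕ => exp (θ * I) ^ (-(k : ℤ)) • a ^ k) (circleResolvent a θ) := by
  unfold circleResolvent
  convert hasSum_geom_series_inverse _ ((norm_exp_mul_I_inv_smul θ a).trans_lt ha) using 1
  ext k
  rw [_root_.smul_pow, zpow_neg, zpow_natCast, inv_pow]

theorem hasSum_star_circleResolvent (ha : ‖a‖ < 1) (θ : ℝ) :
    HasSum (fun k : ℕ => exp (θ * I) ^ (k : ℤ) • star a ^ k) (star (circleResolvent a θ)) := by
  convert (hasSum_circleResolvent ha θ).star using 2 with k
  rw [star_smul, star_pow, zpow_neg, ← inv_zpow, Complex.star_def, map_zpow₀,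
    Complex.inv_eq_conj (norm_exp_ofReal_mul_I θ), Complex.conj_conj]

theorem integral_exp_pow_smul_circleResolvent (ha : ‖a‖ < 1) (n : ℕ) :
    ∫ θ in (0 : ℝ)..2 * π, exp (θ * I) ^ n • circleResolvent a θ = (2 * π : ℂ) • a ^ n := by
  simp_rw [exp_mul_I_pow_smul_eq_tsum (hasSum_circleResolvent ha _) n]
  have hsum := hasSum_integral_tsum_exp_zpow_smul (fun k : ℕ => (n : ℤ) + -(k : ℤ))
    (a := (a ^ ·)) (summable_norm_geometric_of_norm_lt_one ha)
  refine hsum.unique (hasSum_single n fun k hk => ?_) |>.trans ?_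
  · exact if_neg (by omega)
  · simp

theorem integral_exp_pow_smul_star_circleResolvent (ha : ‖a‖ < 1) (n : ℕ) :
    ∫ θ in (0 : ℝ)..2 * π, exp (θ * I) ^ n • star (circleResolvent a θ) =
      if n = 0 then (2 * π : ℂ) • 1 else 0 := by
  simp_rw [exp_mul_I_pow_smul_eq_tsum (hasSum_star_circleResolvent ha _) n]
  have hsum := hasSum_integral_tsum_exp_zpow_smul (fun k : ℕ => (n : ℤ) + (k : ℤ))
    (a := (star a ^ ·)) (summable_norm_geometric_of_norm_lt_one (r := star a) (by rwa [norm_star]))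
  refine hsum.unique (hasSum_single 0 fun k hk => ?_) |>.trans ?_
  · exact if_neg (by omega)
  · simp

theorem integral_exp_pow_smul_operatorPoissonKernel (ha : ‖a‖ < 1) (n : ℕ) :
    ∫ θ in (0 : ℝ)..2 * π, exp (θ * I) ^ n • operatorPoissonKernel a θ = (2 * π : ℂ) • a ^ n := by
  have hexp : Continuous fun θ : ℝ => exp (θ * I) ^ n := by fun_prop
  have hS := continuous_circleResolvent ha
  simp only [operatorPoissonKernel, smul_sub, smul_add]
  rw [intervalIntegral.integral_sub, intervalIntegral.integral_add,
    integral_exp_pow_smul_circleResolvent ha, integral_exp_pow_smul_star_circleResolvent ha,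
    intervalIntegral.integral_smul_const]
  · simp [← zpow_natCast, integral_exp_mul_I_zpow]
  all_goals exact Continuous.intervalIntegrable (by fun_prop) _ _

theorem integral_eval_exp_smul_operatorPoissonKernel (ha : ‖a‖ < 1) (p : ℂ[X]) :
    ∫ θ in (0 : ℝ)..2 * π, p.eval (exp (θ * I)) • operatorPoissonKernel a θ =
      (2 * π : ℂ) • aeval a p :=
  integral_eval_exp_smul (continuous_operatorPoissonKernel ha)
    (integral_exp_pow_smul_operatorPoissonKernel ha) p

end

open scoped InnerProductSpace

section

variable {H : Type*} [NormedAddCommGroup H] [InnerProductSpace ℂ H]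

theorem ContinuousLinearMap.opNorm_le_of_norm_inner_le {A : H →L[ℂ] H} {M : ℝ} (hM : 0 ≤ M)
    (h : ∀ x y : H, ‖x‖ = 1 → ‖y‖ = 1 → ‖⟪y, A x⟫_ℂ‖ ≤ M) : ‖A‖ ≤ M := by
  refine opNorm_le_of_unit_norm hM fun x hx => ?_
  rcases eq_or_ne (A x) 0 with hAx | hAx
  · simpa [hAx] using hM
  have := h x _ hx (norm_smul_inv_norm (𝕜 := ℂ) hAx)
  rwa [inner_smul_left, inner_self_eq_norm_sq_to_K, norm_mul, norm_pow, RCLike.norm_conj,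
    norm_inv, RCLike.norm_ofReal, abs_norm, sq,
    inv_mul_cancel_left₀ (norm_ne_zero_iff.2 hAx)] at this

variable [CompleteSpace H]

theorem ContinuousLinearMap.norm_inner_apply_le_of_nonneg {P : H →L[ℂ] H} (hP : 0 ≤ P) (x y : H) :
    ‖⟪y, P x⟫_ℂ‖ ≤ (re ⟪x, P x⟫_ℂ + re ⟪y, P y⟫_ℂ) / 2 := by
  obtain ⟨b, rfl⟩ := CStarAlgebra.nonneg_iff_eq_star_mul_self.1 hP
  have hb (u v : H) : ⟪u, (star b * b) v⟫_ℂ = ⟪b u, b v⟫_ℂ := by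
    rw [mul_apply_eq_comp, star_eq_adjoint, adjoint_inner_right]
  simp only [hb, ← RCLike.re_to_complex, inner_self_eq_norm_sq]
  nlinarith [norm_inner_le_norm (𝕜 := ℂ) (b y) (b x), two_mul_le_add_sq ‖b x‖ ‖b y‖]

variable {T : H →L[ℂ] H}

theorem inner_aeval_eq_integral (hT : ‖T‖ < 1) (p : ℂ[X]) (x y : H) :
    (2 * π : ℂ) * ⟪y, aeval T p x⟫_ℂ =
      ∫ θ in (0 : ℝ)..2 * π, p.eval (exp (θ * I)) * ⟪y, operatorPoissonKernel T θ x⟫_ℂ := by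
  have hP := continuous_operatorPoissonKernel hT
  let L : (H →L[ℂ] H) →L[ℂ] ℂ := (innerSL ℂ y).comp (ContinuousLinearMap.apply ℂ H x)
  have hL := L.intervalIntegral_comp_comm (a := 0) (b := 2 * π) (μ := MeasureTheory.volume)
    (f := fun θ => p.eval (exp (θ * I)) • operatorPoissonKernel T θ)
    (Continuous.intervalIntegrable (by fun_prop) _ _)
  rw [integral_eval_exp_smul_operatorPoissonKernel hT] at hL
  simpa [L, inner_smul_right] using hL.symm

theorem integral_re_inner_operatorPoissonKernel_self (hT : ‖T‖ < 1) (x : H) :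
    ∫ θ in (0 : ℝ)..2 * π, re ⟪x, operatorPoissonKernel T θ x⟫_ℂ = 2 * π * ‖x‖ ^ 2 := by
  have hP := continuous_operatorPoissonKernel hT
  have h := inner_aeval_eq_integral hT 1 x x
  simp only [map_one, eval_one, one_mul] at h
  have hre := RCLike.reCLM.intervalIntegral_comp_comm (a := 0) (b := 2 * π)
    (μ := MeasureTheory.volume) (f := fun θ => ⟪x, operatorPoissonKernel T θ x⟫_ℂ)
    (Continuous.intervalIntegrable (by fun_prop) _ _)
  simp only [RCLike.reCLM_apply, RCLike.re_to_complex, ← h] at hre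
  rw [hre, one_apply_eq_self, inner_self_eq_norm_sq_to_K]
  simp [← ofReal_pow]

theorem norm_inner_aeval_le_of_norm_lt_one (hT : ‖T‖ < 1) {p : ℂ[X]} {M : ℝ}
    (hM : ∀ z : ℂ, ‖z‖ = 1 → ‖p.eval z‖ ≤ M) {x y : H} (hx : ‖x‖ = 1) (hy : ‖y‖ = 1) :
    ‖⟪y, aeval T p x⟫_ℂ‖ ≤ M := by
  have hP := continuous_operatorPoissonKernel hT
  have hbound : ∀ θ : ℝ, ‖p.eval (exp (θ * I)) * ⟪y, operatorPoissonKernel T θ x⟫_ℂ‖ ≤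
      M * ((re ⟪x, operatorPoissonKernel T θ x⟫_ℂ + re ⟪y, operatorPoissonKernel T θ y⟫_ℂ) / 2) :=
    fun θ => by
      rw [norm_mul]
      exact mul_le_mul (hM _ (norm_exp_ofReal_mul_I θ))
        (ContinuousLinearMap.norm_inner_apply_le_of_nonneg (operatorPoissonKernel_nonneg hT θ) x y)
        (norm_nonneg _)
        ((norm_nonneg _).trans (hM 1 (by simp)))
  have h2π : (0 : ℝ) < 2 * π := by positivity
  refine le_of_mul_le_mul_left ?_ h2π
  calc 2 * π * ‖⟪y, aeval T p x⟫_ℂ‖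
      = ‖∫ θ in (0 : ℝ)..2 * π, p.eval (exp (θ * I)) * ⟪y, operatorPoissonKernel T θ x⟫_ℂ‖ := by
        rw [← inner_aeval_eq_integral hT, norm_mul, norm_mul, Complex.norm_two, norm_real,
          Real.norm_of_nonneg Real.pi_pos.le]
    _ ≤ ∫ θ in (0 : ℝ)..2 * π, M * ((re ⟪x, operatorPoissonKernel T θ x⟫_ℂ +
          re ⟪y, operatorPoissonKernel T θ y⟫_ℂ) / 2) :=
        intervalIntegral.norm_integral_le_of_norm_le h2π.le (.of_forall fun θ _ => hbound θ)
          (Continuous.intervalIntegrable (by fun_prop) _ _)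
    _ = 2 * π * M := by
        rw [intervalIntegral.integral_const_mul, intervalIntegral.integral_div,
          intervalIntegral.integral_add, integral_re_inner_operatorPoissonKernel_self hT,
          integral_re_inner_operatorPoissonKernel_self hT, hx, hy]
        · ring
        all_goals exact Continuous.intervalIntegrable (by fun_prop) _ _

theorem norm_aeval_le_of_norm_lt_one (hT : ‖T‖ < 1) {p : ℂ[X]} {M : ℝ}
    (hM : ∀ z : ℂ, ‖z‖ = 1 → ‖p.eval z‖ ≤ M) : ‖aeval T p‖ ≤ M :=
  ContinuousLinearMap.opNorm_le_of_norm_inner_le ((norm_nonneg _).trans (hM 1 (by simp)))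
    fun _ _ hx hy => norm_inner_aeval_le_of_norm_lt_one hT hM hx hy

theorem norm_aeval_le_of_norm_le_one (hT : ‖T‖ ≤ 1) {p : ℂ[X]} {M : ℝ}
    (hM : ∀ z : ℂ, ‖z‖ = 1 → ‖p.eval z‖ ≤ M) : ‖aeval T p‖ ≤ M := by
  have hcont : Continuous fun t : ℝ => ‖aeval ((t : ℂ) • T) p‖ :=
    (p.continuous_aeval.comp (continuous_ofReal.smul continuous_const)).norm
  have hlim := (hcont.tendsto 1).mono_left (nhdsWithin_le_nhds (s := Set.Iio 1))
  rw [ofReal_one, one_smul] at hlim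
  refine le_of_tendsto hlim ?_
  filter_upwards [Ioo_mem_nhdsLT zero_lt_one] with t ht
  refine norm_aeval_le_of_norm_lt_one ?_ hM
  rw [norm_smul, norm_real, Real.norm_of_nonneg ht.1.le]
  linarith [mul_le_mul_of_nonneg_left hT ht.1.le, ht.2]

end

open Metric

/-- von Neumann's inequality: if `T` is a contraction on a
complex Hilbert space and `p` a complex polynomial, then
`‖p(T)‖ ≤ sup_{|z| ≤ 1} |p z|`. -/
theorem stmt_12 {H : Type*} [NormedAddCommGroup H] [InnerProductSpace ℂ H]
    [CompleteSpace H] (T : H →L[ℂ] H) (hT : ‖T‖ ≤ 1) (p : Polynomial ℂ) :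
    ‖Polynomial.aeval T p‖ ≤ ⨆ z : closedBall (0 : ℂ) 1, ‖p.eval (z : ℂ)‖ := by
  have hbdd : BddAbove (Set.range fun z : closedBall (0 : ℂ) 1 => ‖p.eval (z : ℂ)‖) := by
    have := (isCompact_closedBall (0 : ℂ) 1).bddAbove_image p.continuous.norm.continuousOn
    rwa [Set.image_eq_range] at this
  exact norm_aeval_le_of_norm_le_one hT fun z hz =>
    le_ciSup hbdd ⟨z, by simpa using hz.le⟩
end

section
/- Let {a_j} be a sequence in the open unit disc with all a_j ≠ 0. The infinite Blaschke product Π_j (|a_j|/a_j)·(a_j - z)/(1 - conj(a_j)z) converges uniformly on compact subsets of the disc to a nonzero holomorphic function if and only if Σ_j (1 - |a_j|) < ∞; in that case its zero set is exactly {a_j}. -/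
/-!
With `b_a` the Blaschke factor at `a`, one has
`b_a z - 1 = (|a| - 1)(1 + (|a|/a) z) / (1 - conj a z)`, so
`|b_a z - 1| ≤ (1 + r)/(1 - r) (1 - |a|)` on `|z| ≤ r`. Summability of `1 - |a_j|` therefore
makes `∏ (1 + (b_{a_j} - 1))` converge locally uniformly on the disc, and such a product
vanishes only where one of its factors does. Conversely,
`1 - |b_a z|² = (1 - |a|²)(1 - |z|²)/|1 - conj a z|² ≥ (1 - |z|)/(1 + |z|) (1 - |a|)`,
so if `Σ (1 - |a_j|)` diverges the partial products tend to `0` at every point of the disc.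
-/

open Metric Filter

/-- Partial products of the Blaschke product with zeros `a j`. -/
noncomputable def blaschkePartial (a : ℕ → ℂ) (N : ℕ) (z : ℂ) : ℂ :=
  ∏ j ∈ Finset.range N,
    ((‖a j‖ : ℂ) / a j) * ((a j - z) / (1 - starRingEnd ℂ (a j) * z))

open Complex ComplexConjugate Topology

noncomputable def blaschkeFactor (a z : ℂ) : ℂ :=
  ((‖a‖ : ℂ) / a) * ((a - z) / (1 - conj a * z))

lemma blaschkePartial_eq_prod (a : ℕ → ℂ) (N : ℕ) (z : ℂ) :
    blaschkePartial a N z = ∏ j ∈ Finset.range N, blaschkeFactor (a j) z := rfl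

section BlaschkeFactor

variable {a z : ℂ}

lemma one_sub_norm_le_norm_one_sub_conj_mul (ha : ‖a‖ ≤ 1) :
    1 - ‖z‖ ≤ ‖1 - conj a * z‖ := by
  have : ‖conj a * z‖ ≤ ‖z‖ := by
    rw [norm_mul, RCLike.norm_conj]
    exact mul_le_of_le_one_left (norm_nonneg z) ha
  have := norm_sub_norm_le (1 : ℂ) (conj a * z)
  rw [norm_one] at this
  linarith

lemma norm_one_sub_conj_mul_le : ‖1 - conj a * z‖ ≤ 1 + ‖a‖ * ‖z‖ := by
  simpa [norm_mul, RCLike.norm_conj] using norm_sub_le (1 : ℂ) (conj a * z)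

lemma one_sub_conj_mul_ne_zero (ha : ‖a‖ ≤ 1) (hz : ‖z‖ < 1) : 1 - conj a * z ≠ 0 :=
  norm_pos_iff.mp <| (sub_pos.mpr hz).trans_le (one_sub_norm_le_norm_one_sub_conj_mul ha)

lemma blaschkeFactor_self : blaschkeFactor a a = 0 := by
  simp [blaschkeFactor]

lemma blaschkeFactor_ne_zero (ha0 : a ≠ 0) (ha : ‖a‖ ≤ 1) (hz : ‖z‖ < 1) (haz : a ≠ z) :
    blaschkeFactor a z ≠ 0 := by
  have : (‖a‖ : ℂ) ≠ 0 := by exact_mod_cast norm_ne_zero_iff.mpr ha0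
  unfold blaschkeFactor
  exact mul_ne_zero (div_ne_zero this ha0)
    (div_ne_zero (sub_ne_zero.mpr haz) (one_sub_conj_mul_ne_zero ha hz))

lemma differentiableOn_blaschkeFactor (ha : ‖a‖ ≤ 1) :
    DifferentiableOn ℂ (blaschkeFactor a) (ball 0 1) := by
  intro z hz
  have hz : ‖z‖ < 1 := by simpa using hz
  unfold blaschkeFactor
  have := one_sub_conj_mul_ne_zero ha hz
  fun_prop (disch := assumption)

lemma norm_blaschkeFactor (ha0 : a ≠ 0) :
    ‖blaschkeFactor a z‖ = ‖a - z‖ / ‖1 - conj a * z‖ := by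
  rw [blaschkeFactor, norm_mul, norm_div, norm_div, norm_real, Real.norm_eq_abs,
    abs_norm, div_self (norm_ne_zero_iff.mpr ha0), one_mul]

lemma norm_one_sub_conj_mul_sq_sub_norm_sub_sq :
    ‖1 - conj a * z‖ ^ 2 - ‖a - z‖ ^ 2 = (1 - ‖a‖ ^ 2) * (1 - ‖z‖ ^ 2) := by
  simp only [Complex.sq_norm, normSq_apply, sub_re, sub_im, mul_re, mul_im, one_re, one_im,
    conj_re, conj_im]
  ring

lemma blaschkeFactor_sub_one (ha0 : a ≠ 0) (hd : 1 - conj a * z ≠ 0) :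
    blaschkeFactor a z - 1 = (‖a‖ - 1) * (a + ‖a‖ * z) / (a * (1 - conj a * z)) := by
  have haa : conj a * a = (‖a‖ : ℂ) ^ 2 := by rw [mul_comm, mul_conj']
  rw [blaschkeFactor, div_mul_div_comm, div_sub_one (mul_ne_zero ha0 hd)]
  congr 1
  linear_combination z * haa

lemma norm_blaschkeFactor_sub_one_le {r : ℝ} (ha0 : a ≠ 0) (ha : ‖a‖ ≤ 1) (hz : ‖z‖ ≤ r)
    (hr : r < 1) : ‖blaschkeFactor a z - 1‖ ≤ (1 + r) / (1 - r) * (1 - ‖a‖) := by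
  have hd := one_sub_norm_le_norm_one_sub_conj_mul (z := z) ha
  have hdpos : 0 < ‖1 - conj a * z‖ := by linarith
  have hnum : ‖a + ‖a‖ * z‖ ≤ ‖a‖ * (1 + r) := by
    calc ‖a + ‖a‖ * z‖ ≤ ‖a‖ + ‖a‖ * ‖z‖ := by
          simpa [norm_mul] using norm_add_le a (‖a‖ * z)
      _ ≤ ‖a‖ * (1 + r) := by nlinarith [norm_nonneg a]
  have hcoef : ‖(‖a‖ : ℂ) - 1‖ = 1 - ‖a‖ := by
    rw [← ofReal_one, ← ofReal_sub, norm_real, Real.norm_eq_abs, abs_of_nonpos (by linarith)]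
    ring
  rw [blaschkeFactor_sub_one ha0 (norm_pos_iff.mp hdpos), norm_div, norm_mul, norm_mul, hcoef,
    div_le_iff₀ (mul_pos (norm_pos_iff.mpr ha0) hdpos)]
  calc (1 - ‖a‖) * ‖a + ‖a‖ * z‖ ≤ (1 - ‖a‖) * (‖a‖ * (1 + r)) :=
        mul_le_mul_of_nonneg_left hnum (by linarith)
    _ = (1 + r) / (1 - r) * (1 - ‖a‖) * (‖a‖ * (1 - r)) := by
        field_simp [(by linarith : 1 - r ≠ 0)]
    _ ≤ (1 + r) / (1 - r) * (1 - ‖a‖) * (‖a‖ * ‖1 - conj a * z‖) := by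
        have : 0 < 1 - r := by linarith
        have : 0 ≤ (1 + r) / (1 - r) * (1 - ‖a‖) :=
          mul_nonneg (div_nonneg (by linarith [norm_nonneg z]) this.le) (by linarith)
        gcongr
        linarith

lemma sq_norm_blaschkeFactor_le (ha0 : a ≠ 0) (ha : ‖a‖ ≤ 1) (hz : ‖z‖ < 1) :
    ‖blaschkeFactor a z‖ ^ 2 ≤ 1 - (1 - ‖z‖) / (1 + ‖z‖) * (1 - ‖a‖) := by
  rw [norm_blaschkeFactor ha0, div_pow]
  set c := (1 - ‖z‖) / (1 + ‖z‖)
  set D := ‖1 - conj a * z‖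
  have hD : D ≤ 1 + ‖z‖ := norm_one_sub_conj_mul_le.trans (by nlinarith [norm_nonneg z])
  have hDpos : 0 < D := by linarith [one_sub_norm_le_norm_one_sub_conj_mul (z := z) ha]
  have hc : c * D ^ 2 ≤ 1 - ‖z‖ ^ 2 := by
    rw [div_mul_eq_mul_div, div_le_iff₀ (by positivity)]
    have : D ^ 2 ≤ (1 + ‖z‖) ^ 2 := by gcongr
    nlinarith
  have hdefect : c * (1 - ‖a‖) * D ^ 2 ≤ (1 - ‖a‖ ^ 2) * (1 - ‖z‖ ^ 2) :=
    calc c * (1 - ‖a‖) * D ^ 2 = (1 - ‖a‖) * (c * D ^ 2) := by ring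
      _ ≤ (1 - ‖a‖) * (1 - ‖z‖ ^ 2) := mul_le_mul_of_nonneg_left hc (by linarith)
      _ ≤ (1 - ‖a‖ ^ 2) * (1 - ‖z‖ ^ 2) :=
        mul_le_mul_of_nonneg_right (by nlinarith [norm_nonneg a]) (by nlinarith [norm_nonneg z])
  rw [div_le_iff₀ (by positivity)]
  linarith [norm_one_sub_conj_mul_sq_sub_norm_sub_sq (a := a) (z := z)]

end BlaschkeFactor

lemma tendsto_prod_range_zero_of_le_exp_neg {p t : ℕ → ℝ} (hp : ∀ n, 0 ≤ p n)
    (hpt : ∀ n, p n ≤ Real.exp (-t n)) (ht : ∀ n, 0 ≤ t n) (hts : ¬Summable t) :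
    Tendsto (fun N => ∏ n ∈ Finset.range N, p n) atTop (𝓝 0) := by
  have hexp : Tendsto (fun N => Real.exp (-∑ n ∈ Finset.range N, t n)) atTop (𝓝 0) :=
    Real.tendsto_exp_atBot.comp <| tendsto_neg_atTop_atBot.comp <|
      (not_summable_iff_tendsto_nat_atTop_of_nonneg ht).mp hts
  refine squeeze_zero (fun N => Finset.prod_nonneg fun n _ => hp n) (fun N => ?_) hexp
  rw [← Finset.sum_neg_distrib, Real.exp_sum]
  exact Finset.prod_le_prod (fun n _ => hp n) fun n _ => hpt n

lemma tendsto_blaschkePartial_zero_of_not_summable {a : ℕ → ℂ} (h0 : ∀ j, a j ≠ 0)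
    (h1 : ∀ j, ‖a j‖ ≤ 1) (hs : ¬Summable fun j => 1 - ‖a j‖) {z : ℂ} (hz : ‖z‖ < 1) :
    Tendsto (fun N => blaschkePartial a N z) atTop (𝓝 0) := by
  set c := (1 - ‖z‖) / (1 + ‖z‖)
  have hc : 0 < c := div_pos (by linarith) (by linarith [norm_nonneg z])
  rw [tendsto_zero_iff_norm_tendsto_zero]
  simp only [blaschkePartial_eq_prod, norm_prod]
  refine tendsto_prod_range_zero_of_le_exp_neg (t := fun j => c / 2 * (1 - ‖a j‖))
    (fun j => norm_nonneg _) (fun j => ?_) (fun j => by have := h1 j; positivity)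
    ((summable_mul_left_iff (by positivity)).not.mpr hs)
  have hsq : ‖blaschkeFactor (a j) z‖ ^ 2 ≤ 1 - c * (1 - ‖a j‖) :=
    sq_norm_blaschkeFactor_le (h0 j) (h1 j) hz
  refine le_trans ?_ (Real.one_sub_le_exp_neg _)
  nlinarith [norm_nonneg (blaschkeFactor (a j) z), sq_nonneg (c / 2 * (1 - ‖a j‖))]

lemma hasProdLocallyUniformlyOn_blaschkeFactor {a : ℕ → ℂ} (h0 : ∀ j, a j ≠ 0)
    (h1 : ∀ j, ‖a j‖ ≤ 1) (hs : Summable fun j => 1 - ‖a j‖) :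
    HasProdLocallyUniformlyOn (fun j => blaschkeFactor (a j))
      (fun z => ∏' j, blaschkeFactor (a j) z) (ball 0 1) := by
  refine hasProdLocallyUniformlyOn_of_forall_compact isOpen_ball fun K hK hKc => ?_
  obtain ⟨r, hr, hKr⟩ := exists_lt_subset_ball hKc.isClosed hK
  have := Summable.hasProdUniformlyOn_nat_one_add hKc (hs.mul_left ((1 + r) / (1 - r)))
    (Eventually.of_forall fun j z hz => norm_blaschkeFactor_sub_one_le (h0 j) (h1 j)
      (mem_ball_zero_iff.mp (hKr hz)).le hr)
    fun j => ((differentiableOn_blaschkeFactor (h1 j)).continuousOn.mono hK).sub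
      continuousOn_const
  simpa only [add_sub_cancel] using this

lemma eq_zero_iff_of_tendsto_blaschkePartial {a : ℕ → ℂ} (h0 : ∀ j, a j ≠ 0)
    (h1 : ∀ j, ‖a j‖ ≤ 1) (hs : Summable fun j => 1 - ‖a j‖) {z L : ℂ} (hz : ‖z‖ < 1)
    (hL : Tendsto (fun N => blaschkePartial a N z) atTop (𝓝 L)) :
    L = 0 ↔ ∃ j, a j = z := by
  constructor
  · intro hL0
    by_contra! hne
    have hsum : Summable fun j => ‖blaschkeFactor (a j) z - 1‖ :=
      (hs.mul_left _).of_nonneg_of_le (fun _ => norm_nonneg _)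
        fun j => norm_blaschkeFactor_sub_one_le (h0 j) (h1 j) le_rfl hz
    have hprod := (multipliable_one_add_of_summable hsum).hasProd.tendsto_prod_nat
    have hne0 := tprod_one_add_ne_zero_of_summable
      (fun j => by simpa using blaschkeFactor_ne_zero (h0 j) (h1 j) hz (hne j)) hsum
    simp only [add_sub_cancel] at hprod hne0
    exact hne0 (tendsto_nhds_unique hprod hL ▸ hL0)
  · rintro ⟨j, rfl⟩
    have : ∀ᶠ N in atTop, 0 = blaschkePartial a N (a j) := eventually_atTop.2
      ⟨j + 1, fun N hN => (Finset.prod_eq_zero (Finset.mem_range.2 hN) blaschkeFactor_self).symm⟩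
    exact tendsto_nhds_unique hL (tendsto_const_nhds.congr' this)

/-- for a sequence `a j ≠ 0` in the open unit disc, the Blaschke
product converges uniformly on compact subsets of the disc to a nonzero
holomorphic function iff `Σ (1 - |a j|) < ∞`; in that case its zero set is
exactly `{a j}`. -/
theorem stmt_14 (a : ℕ → ℂ) (h0 : ∀ j, a j ≠ 0) (h1 : ∀ j, ‖a j‖ < 1) :
    ((∃ B : ℂ → ℂ, DifferentiableOn ℂ B (ball (0 : ℂ) 1) ∧
        (∃ z ∈ ball (0 : ℂ) 1, B z ≠ 0) ∧
        TendstoLocallyUniformlyOn (blaschkePartial a) B atTop (ball (0 : ℂ) 1)) ↔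
      Summable fun j => 1 - ‖a j‖) ∧
    ((Summable fun j => 1 - ‖a j‖) → ∀ B : ℂ → ℂ,
      TendstoLocallyUniformlyOn (blaschkePartial a) B atTop (ball (0 : ℂ) 1) →
      ∀ z ∈ ball (0 : ℂ) 1, (B z = 0 ↔ ∃ j, a j = z)) := by
  have h1' : ∀ j, ‖a j‖ ≤ 1 := fun j => (h1 j).le
  have hzero (hs : Summable fun j => 1 - ‖a j‖) (B : ℂ → ℂ)
      (hB : TendstoLocallyUniformlyOn (blaschkePartial a) B atTop (ball (0 : ℂ) 1))
      (z : ℂ) (hz : z ∈ ball (0 : ℂ) 1) : B z = 0 ↔ ∃ j, a j = z :=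
    eq_zero_iff_of_tendsto_blaschkePartial h0 h1' hs (mem_ball_zero_iff.mp hz) (hB.tendsto_at hz)
  refine ⟨⟨?_, fun hs => ?_⟩, hzero⟩
  · rintro ⟨B, -, ⟨z, hz, hBz⟩, hB⟩
    by_contra hs
    exact hBz <| tendsto_nhds_unique (hB.tendsto_at hz)
      (tendsto_blaschkePartial_zero_of_not_summable h0 h1' hs (mem_ball_zero_iff.mp hz))
  · have hB :=
      (hasProdLocallyUniformlyOn_blaschkeFactor h0 h1' hs).tendstoLocallyUniformlyOn_finsetRange
    have hdiff (N : ℕ) : DifferentiableOn ℂ (blaschkePartial a N) (ball 0 1) :=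
      DifferentiableOn.fun_finsetProd fun j _ => differentiableOn_blaschkeFactor (h1' j)
    refine ⟨_, hB.differentiableOn (Eventually.of_forall hdiff) isOpen_ball,
      ⟨0, mem_ball_self one_pos, fun hB0 => ?_⟩, hB⟩
    obtain ⟨j, hj⟩ := (hzero hs _ hB 0 (mem_ball_self one_pos)).mp hB0
    exact h0 j hj
end
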